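/- arXiv:2003.06210 — 5 statements merged into one kernel-verified Lean document; each statement's English description precedes it below -/
import Mathlib

section
/- For any n×n complex symmetric Laplacian matrix Y (i.e., Y = Yᵀ and Y·1ₙ = 0ₙ), there exists a unique (n(n+1)/2) × (n(n-1)/2) matrix T, depending only on n, such that vech(Y) = T · ve(Y), where ve(Y) is the vector of negated strictly-below-diagonal entries of Y. -/
open Matrix

/-- Index set for half-vectorization: pairs `(i, j)` with `j ≤ i`. -/
def vechIdx (n : ℕ) := {p : Fin n × Fin n // p.2 ≤ p.1}

instance (n : ℕ) : Fintype (vechIdx n) := by unfold vechIdx; infer_instance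

/-- Index set for `ve`: pairs `(i, j)` with `j < i` (strictly below diagonal),
of cardinality `n(n-1)/2`. -/
def veIdx (n : ℕ) := {p : Fin n × Fin n // p.2 < p.1}

instance (n : ℕ) : Fintype (veIdx n) := by unfold veIdx; infer_instance

/-- Half-vectorization: the entries `Y i j` with `i ≥ j`. -/
def vech {n : ℕ} (Y : Matrix (Fin n) (Fin n) ℂ) : vechIdx n → ℂ :=
  fun p => Y p.1.1 p.1.2

/-- Negated strictly-below-diagonal entries: `−Y i j` for `i > j`. -/
def ve {n : ℕ} (Y : Matrix (Fin n) (Fin n) ℂ) : veIdx n → ℂ :=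
  fun p => -Y p.1.1 p.1.2

/-!
A symmetric Laplacian `Y` is the Laplacian `diagonal (W *ᵥ 1) - W` of the symmetric zero-diagonal
matrix `W = diagonal Y.diag - Y`, and `W` is rebuilt from `ve Y` by symmetry. Conversely every
vector `v` is `ve` of the Laplacian of the symmetric zero-diagonal matrix with lower triangle `v`.
So `ve` is a bijection from symmetric Laplacians onto all vectors, with a linear inverse, and the
condition on `T` says exactly that `T` is the matrix of the linear map `ve Y ↦ vech Y`.
-/

variable {ι R : Type*} [Fintype ι] [DecidableEq ι]

section laplacian

variable [Ring R]

def laplacian (W : Matrix ι ι R) : Matrix ι ι R :=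
  diagonal (W *ᵥ 1) - W

theorem laplacian_mulVec_one (W : Matrix ι ι R) : laplacian W *ᵥ 1 = 0 := by
  ext i
  simp [laplacian, sub_mulVec, mulVec_diagonal]

theorem isSymm_laplacian {W : Matrix ι ι R} (hW : W.IsSymm) : (laplacian W).IsSymm :=
  (isSymm_diagonal _).sub hW

theorem laplacian_apply_of_ne (W : Matrix ι ι R) {i j : ι} (h : i ≠ j) :
    laplacian W i j = -W i j := by
  simp [laplacian, diagonal_apply_ne _ h]

theorem laplacian_add (W W' : Matrix ι ι R) : laplacian (W + W') = laplacian W + laplacian W' := by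
  rw [laplacian, laplacian, laplacian, add_mulVec, sub_add_sub_comm, diagonal_add]
  rfl

theorem laplacian_smul (c : R) (W : Matrix ι ι R) : laplacian (c • W) = c • laplacian W := by
  rw [laplacian, laplacian, smul_mulVec, diagonal_smul, smul_sub]

theorem laplacian_diagonal_diag_sub {Y : Matrix ι ι R} (hY : Y *ᵥ 1 = 0) :
    laplacian (diagonal Y.diag - Y) = Y := by
  have hrow : (diagonal Y.diag - Y) *ᵥ 1 = Y.diag := by
    ext i
    simp [sub_mulVec, hY, mulVec_diagonal]
  rw [laplacian, hrow, sub_sub_cancel]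

end laplacian

def symmOfLower {n : ℕ} [Zero R] (v : veIdx n → R) : Matrix (Fin n) (Fin n) R :=
  fun i j => if h : j < i then v ⟨(i, j), h⟩ else if h : i < j then v ⟨(j, i), h⟩ else 0

section symmOfLower

variable {n : ℕ}

theorem isSymm_symmOfLower [Zero R] (v : veIdx n → R) : (symmOfLower v).IsSymm := by
  ext i j
  simp only [transpose_apply, symmOfLower]
  split_ifs <;> first | rfl | omega

theorem symmOfLower_add [AddZeroClass R] (v w : veIdx n → R) :
    symmOfLower (v + w) = symmOfLower v + symmOfLower w := by
  ext i j
  simp only [symmOfLower, Matrix.add_apply]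
  split_ifs <;> first | rfl | exact (add_zero 0).symm

theorem symmOfLower_smul {S : Type*} [Zero R] [SMulZeroClass S R] (c : S) (v : veIdx n → R) :
    symmOfLower (c • v) = c • symmOfLower v := by
  ext i j
  simp only [symmOfLower, Matrix.smul_apply]
  split_ifs <;> first | rfl | exact (smul_zero c).symm

theorem ve_laplacian_symmOfLower (v : veIdx n → ℂ) : ve (laplacian (symmOfLower v)) = v := by
  ext ⟨⟨i, j⟩, h⟩
  simp [ve, laplacian_apply_of_ne _ h.ne', symmOfLower, h]

theorem symmOfLower_ve {Y : Matrix (Fin n) (Fin n) ℂ} (hY : Y.IsSymm) :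
    symmOfLower (ve Y) = diagonal Y.diag - Y := by
  ext i j
  rcases lt_trichotomy i j with h | rfl | h
  · simp [symmOfLower, ve, h, h.not_gt, diagonal_apply_ne _ h.ne, hY.apply]
  · simp [symmOfLower]
  · simp [symmOfLower, ve, h, diagonal_apply_ne _ h.ne']

end symmOfLower

instance (n : ℕ) : DecidableEq (veIdx n) :=
  inferInstanceAs (DecidableEq {p : Fin n × Fin n // p.2 < p.1})

/-- `ve Y ↦ vech Y` on symmetric Laplacians `Y`, computed through the inverse
`v ↦ laplacian (symmOfLower v)` of `ve`. -/
noncomputable def vechOfVe (n : ℕ) : (veIdx n → ℂ) →ₗ[ℂ] vechIdx n → ℂ where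
  toFun v := vech (laplacian (symmOfLower v))
  map_add' v w := by rw [symmOfLower_add, laplacian_add]; rfl
  map_smul' c v := by rw [symmOfLower_smul, laplacian_smul]; rfl

theorem forall_vech_eq_mulVec_ve_iff {n : ℕ} (T : Matrix (vechIdx n) (veIdx n) ℂ) :
    (∀ Y : Matrix (Fin n) (Fin n) ℂ, Y = Yᵀ → Y *ᵥ 1 = 0 → vech Y = T *ᵥ ve Y) ↔
      vechOfVe n = toLin' T := by
  constructor
  · refine fun hT => LinearMap.ext fun v => ?_
    have h := hT _ (isSymm_laplacian (isSymm_symmOfLower v)).symm (laplacian_mulVec_one _)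
    rwa [ve_laplacian_symmOfLower] at h
  · rintro hT Y hsymm hY
    have hL : laplacian (symmOfLower (ve Y)) = Y := by
      rw [symmOfLower_ve hsymm.symm, laplacian_diagonal_diag_sub hY]
    rw [← toLin'_apply, ← hT]
    exact congrArg vech hL.symm

/-- Existence and uniqueness of the transformation matrix `T`
(an `n(n+1)/2 × n(n-1)/2` matrix depending only on `n`) with
`vech Y = T • ve Y` for every symmetric Laplacian `Y`. -/
theorem transformation_matrix_exists_unique (n : ℕ) :
    ∃! T : Matrix (vechIdx n) (veIdx n) ℂ,
      ∀ Y : Matrix (Fin n) (Fin n) ℂ, Y = Yᵀ → Y.mulVec 1 = 0 →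
        vech Y = T.mulVec (ve Y) := by
  simp only [forall_vech_eq_mulVec_ve_iff]
  exact ⟨LinearMap.toMatrix' (vechOfVe n), (toLin'_toMatrix' _).symm,
    fun T hT => by rw [hT, LinearMap.toMatrix'_toLin']⟩
end

section
/- Let Z₋ ∈ ℂ^{m×m} be Hermitian positive definite, A ∈ ℂ^{n×m}, λ ∈ (0,1], and Z = (λ Z₋⁻¹ + Aᴴ A)⁻¹. Then Iₙ − A Z Aᴴ is Hermitian positive semidefinite. -/
open Matrix
open scoped ComplexOrder

/-! With `C = λ Z₋⁻¹` positive definite, the Woodbury identity gives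
`1 - A (C + Aᴴ A)⁻¹ Aᴴ = (1 + A C⁻¹ Aᴴ)⁻¹`, the inverse of a positive definite matrix. -/

namespace Matrix

variable {R 𝕜 : Type*} {m n : Type*} [Fintype m] [DecidableEq m] [Fintype n] [DecidableEq n]

theorem inv_one_add_mul_inv_mul [CommRing R] (U : Matrix n m R) (C : Matrix m m R)
    (V : Matrix m n R) (hC : IsUnit C) (hCVU : IsUnit (C + V * U)) :
    (1 + U * C⁻¹ * V)⁻¹ = 1 - U * (C + V * U)⁻¹ * V := by
  have hCC : C⁻¹⁻¹ = C := nonsing_inv_nonsing_inv C ((isUnit_iff_isUnit_det C).mp hC)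
  have woodbury := add_mul_mul_inv_eq_sub 1 U C⁻¹ V isUnit_one (isUnit_nonsing_inv_iff.mpr hC)
    (by simpa only [hCC, inv_one, Matrix.mul_one] using hCVU)
  simpa only [hCC, inv_one, Matrix.mul_one, Matrix.one_mul] using woodbury

theorem PosDef.one_sub_mul_inv_add_conjTranspose_mul_self_mul [RCLike 𝕜] {C : Matrix m m 𝕜}
    (hC : C.PosDef) (A : Matrix n m 𝕜) : (1 - A * (C + Aᴴ * A)⁻¹ * Aᴴ).PosDef := by
  have hB : (C + Aᴴ * A).PosDef := hC.add_posSemidef (posSemidef_conjTranspose_mul_self A)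
  rw [← inv_one_add_mul_inv_mul A C Aᴴ hC.isUnit hB.isUnit]
  exact (PosDef.one.add_posSemidef (hC.inv.posSemidef.mul_mul_conjTranspose_same A)).inv

end Matrix

theorem one_sub_AZAH_posSemidef_general {m n : ℕ}
    (Zm : Matrix (Fin m) (Fin m) ℂ) (hZm : Zm.PosDef)
    (A : Matrix (Fin n) (Fin m) ℂ) (l : ℝ) (hl0 : 0 < l)
    (Z : Matrix (Fin m) (Fin m) ℂ)
    (hZ : Z = ((l : ℂ) • Zm⁻¹ + Aᴴ * A)⁻¹) :
    ((1 : Matrix (Fin n) (Fin n) ℂ) - A * Z * Aᴴ).PosSemidef := by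
  subst hZ
  have hC : ((l : ℂ) • Zm⁻¹).PosDef := hZm.inv.smul (Complex.zero_lt_real.mpr hl0)
  exact (hC.one_sub_mul_inv_add_conjTranspose_mul_self_mul A).posSemidef

/-- With `Z = (λ Z₋⁻¹ + Aᴴ A)⁻¹`, `Z₋` Hermitian positive definite and
`λ ∈ (0,1]`, the matrix `Iₙ − A Z Aᴴ` is Hermitian positive semidefinite. -/
theorem one_sub_AZAH_posSemidef {m n : ℕ}
    (Zm : Matrix (Fin m) (Fin m) ℂ) (hZm : Zm.PosDef)
    (A : Matrix (Fin n) (Fin m) ℂ) (l : ℝ) (hl0 : 0 < l) (hl1 : l ≤ 1)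
    (Z : Matrix (Fin m) (Fin m) ℂ)
    (hZ : Z = ((l : ℂ) • Zm⁻¹ + Aᴴ * A)⁻¹) :
    ((1 : Matrix (Fin n) (Fin n) ℂ) - A * Z * Aᴴ).PosSemidef :=
  one_sub_AZAH_posSemidef_general Zm hZm A l hl0 Z hZ
end

section
/- Lyapunov decrease for noise-free RLS: with the setup of the noise-free RLS error recursion (x̃_t = x̃_{t−1} − Z_t A_tᴴ A_t x̃_{t−1}, Z_t = (λ Z_{t−1}⁻¹ + A_tᴴ A_t)⁻¹), define ε_t := A_t x̃_{t−1} and W_t := x̃_tᴴ Z_t⁻¹ x̃_t. Then W_t = λ W_{t−1} − ε_tᴴ (Iₙ − A_t Z_t A_tᴴ) ε_t. -/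
open Matrix
open scoped ComplexOrder

/-!
Write `M = c • P + Aᴴ A` and `Z = M⁻¹`. The gain step `e ↦ e - Z Aᴴ A e` is chosen so that
`M (e - Z Aᴴ A e) = c • P e`: the new error, measured in the metric of `M`, only sees the old
metric scaled by `c`. Pairing with the new error and using `Z M = 1` once more gives the
correction `eᴴ (Aᴴ A - Aᴴ A Z Aᴴ A) e = (A e)ᴴ (1 - A Z Aᴴ) (A e)`. For RLS, `P = Z_{t-1}⁻¹`
and `c = λ`, and positive definiteness of every `Z_t` (by induction) supplies the invertibility
and hermiticity this needs.
-/

namespace Matrix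

section Update

variable {R m n : Type*} [CommRing R] [StarRing R] [Fintype m] [DecidableEq m] [Fintype n]

theorem mulVec_sub_mul_conjTranspose_mul_mulVec {c : R} {P Z : Matrix m m R}
    (A : Matrix n m R) (hMZ : (c • P + Aᴴ * A) * Z = 1) (e : m → R) :
    (c • P + Aᴴ * A) *ᵥ (e - (Z * Aᴴ * A) *ᵥ e) = c • P *ᵥ e := by
  rw [mulVec_sub, mulVec_mulVec, Matrix.mul_assoc Z, ← Matrix.mul_assoc, hMZ, Matrix.one_mul,
    add_mulVec, smul_mulVec]
  abel

theorem star_sub_dotProduct_inv_mulVec_sub [DecidableEq n] {c : R} (hc : IsSelfAdjoint c)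
    {P : Matrix m m R} (hP : P.IsHermitian) (A : Matrix n m R) {Z : Matrix m m R}
    (hZ : Z = (c • P + Aᴴ * A)⁻¹) (hM : IsUnit (c • P + Aᴴ * A)) (e : m → R) :
    star (e - (Z * Aᴴ * A) *ᵥ e) ⬝ᵥ Z⁻¹ *ᵥ (e - (Z * Aᴴ * A) *ᵥ e) =
      c * (star e ⬝ᵥ P *ᵥ e) - star (A *ᵥ e) ⬝ᵥ (1 - A * Z * Aᴴ) *ᵥ (A *ᵥ e) := by
  rw [isUnit_iff_isUnit_det] at hM
  have hBH : (Aᴴ * A)ᴴ = Aᴴ * A := isHermitian_conjTranspose_mul_self A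
  have hZH : Zᴴ = Z := by rw [hZ]; exact IsHermitian.inv (IsHermitian.add (hc.smul hP) hBH)
  have hZinv : Z⁻¹ = c • P + Aᴴ * A := by rw [hZ, nonsing_inv_nonsing_inv _ hM]
  have hMZ : (c • P + Aᴴ * A) * Z = 1 := hZ ▸ mul_nonsing_inv _ hM
  have hZM : Z * (c • P + Aᴴ * A) = 1 := hZ ▸ nonsing_inv_mul _ hM
  have hcorr : Aᴴ * A * Z * (c • P) = Aᴴ * A - Aᴴ * A * Z * (Aᴴ * A) := by
    rw [eq_sub_iff_add_eq, ← Matrix.mul_add, Matrix.mul_assoc, hZM, Matrix.mul_one]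
  have hsandwich : Aᴴ * (1 - A * Z * Aᴴ) * A = Aᴴ * A - Aᴴ * A * Z * (Aᴴ * A) := by
    simp only [Matrix.mul_sub, Matrix.sub_mul, Matrix.mul_one, Matrix.mul_assoc]
  calc star (e - (Z * Aᴴ * A) *ᵥ e) ⬝ᵥ Z⁻¹ *ᵥ (e - (Z * Aᴴ * A) *ᵥ e)
      = star (e - (Z * Aᴴ * A) *ᵥ e) ⬝ᵥ c • P *ᵥ e := by
        rw [hZinv, mulVec_sub_mul_conjTranspose_mul_mulVec A hMZ]
    _ = c * (star e ⬝ᵥ P *ᵥ e) - star e ⬝ᵥ (Aᴴ * A * Z * (c • P)) *ᵥ e := by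
        rw [star_sub, sub_dotProduct, dotProduct_smul, smul_eq_mul, star_mulVec,
          conjTranspose_mul, conjTranspose_mul, conjTranspose_conjTranspose, hZH,
          ← smul_mulVec]
        simp only [dotProduct_mulVec, vecMul_vecMul, Matrix.mul_assoc]
    _ = c * (star e ⬝ᵥ P *ᵥ e) - star e ⬝ᵥ (Aᴴ * (1 - A * Z * Aᴴ) * A) *ᵥ e := by
        rw [hcorr, hsandwich]
    _ = c * (star e ⬝ᵥ P *ᵥ e) - star (A *ᵥ e) ⬝ᵥ (1 - A * Z * Aᴴ) *ᵥ (A *ᵥ e) := by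
        simp only [star_mulVec, dotProduct_mulVec, vecMul_vecMul]

end Update

theorem PosDef.smul_inv_add_conjTranspose_mul_self {K m n : Type*} [Field K] [PartialOrder K]
    [StarRing K] [StarOrderedRing K] [Fintype m] [DecidableEq m] [Fintype n]
    {P : Matrix m m K} (hP : P.PosDef) {c : K} (hc : 0 < c) (A : Matrix n m K) :
    (c • P⁻¹ + Aᴴ * A).PosDef :=
  (hP.inv.smul hc).add_posSemidef (posSemidef_conjTranspose_mul_self A)

end Matrix

theorem rls_lyapunov_identity_general {m n : ℕ} (x : Fin m → ℂ)
    (A : ℕ → Matrix (Fin n) (Fin m) ℂ)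
    (Z : ℕ → Matrix (Fin m) (Fin m) ℂ)
    (xhat : ℕ → (Fin m → ℂ))
    (l : ℝ) (hl0 : 0 < l)
    (hZ0 : (Z 0).PosDef)
    (hZ : ∀ t : ℕ, Z (t + 1) = ((l : ℂ) • (Z t)⁻¹ + (A (t + 1))ᴴ * A (t + 1))⁻¹)
    (hx : ∀ t : ℕ, xhat (t + 1) = xhat t +
      (Z (t + 1) * (A (t + 1))ᴴ).mulVec ((A (t + 1)).mulVec x - (A (t + 1)).mulVec (xhat t))) :
    ∀ t : ℕ,
      star (xhat (t + 1) - x) ⬝ᵥ (Z (t + 1))⁻¹.mulVec (xhat (t + 1) - x) =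
        (l : ℂ) * (star (xhat t - x) ⬝ᵥ (Z t)⁻¹.mulVec (xhat t - x)) -
          star ((A (t + 1)).mulVec (xhat t - x)) ⬝ᵥ
            (((1 : Matrix (Fin n) (Fin n) ℂ) - A (t + 1) * Z (t + 1) * (A (t + 1))ᴴ).mulVec
              ((A (t + 1)).mulVec (xhat t - x))) := by
  have hl : (0 : ℂ) < l := by exact_mod_cast hl0
  have hpd : ∀ t, (Z t).PosDef := by
    intro t
    induction t with
    | zero => exact hZ0
    | succ t ih => exact hZ t ▸ (ih.smul_inv_add_conjTranspose_mul_self hl _).inv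
  intro t
  have herr : xhat (t + 1) - x =
      (xhat t - x) - (Z (t + 1) * (A (t + 1))ᴴ * A (t + 1)) *ᵥ (xhat t - x) := by
    rw [hx, ← mulVec_mulVec (xhat t - x), mulVec_sub (A (t + 1)) (xhat t) x,
      ← neg_sub (A (t + 1) *ᵥ xhat t), mulVec_neg]
    abel
  rw [herr]
  exact star_sub_dotProduct_inv_mulVec_sub (IsSelfAdjoint.of_nonneg hl.le) (hpd t).inv.isHermitian
    _ (hZ t) ((hpd t).smul_inv_add_conjTranspose_mul_self hl _).isUnit _

/-- Exact one-step evolution of the Lyapunov-like function for noise-free RLS: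
with `ε_t = A_t x̃_{t−1}` and `W_t = x̃_tᴴ Z_t⁻¹ x̃_t`,
`W_t = λ W_{t−1} − ε_tᴴ (Iₙ − A_t Z_t A_tᴴ) ε_t`. -/
theorem rls_lyapunov_identity {m n : ℕ} (x : Fin m → ℂ)
    (A : ℕ → Matrix (Fin n) (Fin m) ℂ)
    (Z : ℕ → Matrix (Fin m) (Fin m) ℂ)
    (xhat : ℕ → (Fin m → ℂ))
    (l : ℝ) (hl0 : 0 < l) (hl1 : l ≤ 1)
    (hZ0 : (Z 0).PosDef)
    (hZ : ∀ t : ℕ, Z (t + 1) = ((l : ℂ) • (Z t)⁻¹ + (A (t + 1))ᴴ * A (t + 1))⁻¹)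
    (hx : ∀ t : ℕ, xhat (t + 1) = xhat t +
      (Z (t + 1) * (A (t + 1))ᴴ).mulVec ((A (t + 1)).mulVec x - (A (t + 1)).mulVec (xhat t))) :
    ∀ t : ℕ,
      star (xhat (t + 1) - x) ⬝ᵥ (Z (t + 1))⁻¹.mulVec (xhat (t + 1) - x) =
        (l : ℂ) * (star (xhat t - x) ⬝ᵥ (Z t)⁻¹.mulVec (xhat t - x)) -
          star ((A (t + 1)).mulVec (xhat t - x)) ⬝ᵥ
            (((1 : Matrix (Fin n) (Fin n) ℂ) - A (t + 1) * Z (t + 1) * (A (t + 1))ᴴ).mulVec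
              ((A (t + 1)).mulVec (xhat t - x))) :=
  rls_lyapunov_identity_general x A Z xhat l hl0 hZ0 hZ hx
end

section
/- For the noise-free RLS recursion with λ ∈ (0,1] and Z₀ Hermitian positive definite, the Lyapunov function W_t := x̃_tᴴ Z_t⁻¹ x̃_t satisfies W_t ≤ λ W_{t−1}, and hence W_t ≤ λᵗ W₀ for all t ≥ 0. -/
open Matrix
open scoped ComplexOrder

/-!
With the information matrix `X = λ Z_t⁻¹` and `B = X + AᴴA = Z_{t+1}⁻¹`, the error recursion reads
`B x̃_{t+1} = X x̃_t`. Writing `w = X x̃_t`, both Lyapunov values are quadratic forms of `w`: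
`W_{t+1} = wᴴ B⁻¹ w` and `λ W_t = wᴴ X⁻¹ w`, so `W_{t+1} ≤ λ W_t` is the operator antitonicity
of inversion applied to `X ≤ B`.
-/

namespace Matrix

open scoped MatrixOrder Matrix.Norms.L2Operator

variable {ι κ : Type*} [Fintype ι] [Fintype κ]

theorem star_dotProduct_mulVec_le_of_le {A B : Matrix ι ι ℂ} (hAB : A ≤ B) (v : ι → ℂ) :
    star v ⬝ᵥ A *ᵥ v ≤ star v ⬝ᵥ B *ᵥ v := by
  simpa [sub_mulVec, dotProduct_sub] using (le_iff.mp hAB).dotProduct_mulVec_nonneg v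

theorem PosDef.add_conjTranspose_mul_self {X : Matrix ι ι ℂ} (hX : X.PosDef) (C : Matrix κ ι ℂ) :
    (X + Cᴴ * C).PosDef :=
  hX.add_posSemidef (posSemidef_conjTranspose_mul_self C)

variable [DecidableEq ι]

theorem PosDef.inv_le_inv {A B : Matrix ι ι ℂ} (hA : A.PosDef) (hAB : A ≤ B) :
    B⁻¹ ≤ A⁻¹ := by
  simpa only [nonsing_inv_eq_ringInverse] using
    CStarAlgebra.ringInverse_le_ringInverse hAB hA.isStrictlyPositive

theorem IsHermitian.star_dotProduct_mulVec_inv_mulVec {M : Matrix ι ι ℂ} (hM : M.IsHermitian)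
    (hdet : IsUnit M.det) (w : ι → ℂ) :
    star (M⁻¹ *ᵥ w) ⬝ᵥ M *ᵥ (M⁻¹ *ᵥ w) = star w ⬝ᵥ M⁻¹ *ᵥ w := by
  rw [mulVec_mulVec, mul_nonsing_inv _ hdet, one_mulVec, star_mulVec, ← dotProduct_mulVec,
    hM.inv.eq]

theorem PosDef.star_dotProduct_mulVec_rls_update_le {X : Matrix ι ι ℂ} (hX : X.PosDef)
    (C : Matrix κ ι ℂ) (e : ι → ℂ) :
    star (e - ((X + Cᴴ * C)⁻¹ * Cᴴ) *ᵥ (C *ᵥ e)) ⬝ᵥ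
        (X + Cᴴ * C) *ᵥ (e - ((X + Cᴴ * C)⁻¹ * Cᴴ) *ᵥ (C *ᵥ e)) ≤ star e ⬝ᵥ X *ᵥ e := by
  set B := X + Cᴴ * C with hB_def
  set e' := e - (B⁻¹ * Cᴴ) *ᵥ (C *ᵥ e)
  have hB : B.PosDef := hX.add_conjTranspose_mul_self C
  have hBdet : IsUnit B.det := hB.isUnit.map detMonoidHom
  have hXdet : IsUnit X.det := hX.isUnit.map detMonoidHom
  set w := X *ᵥ e
  have he' : e' = B⁻¹ *ᵥ w := by
    have hBe' : B *ᵥ e' = w := by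
      rw [mulVec_sub, mulVec_mulVec, ← Matrix.mul_assoc, mul_nonsing_inv _ hBdet, Matrix.one_mul,
        mulVec_mulVec, hB_def, add_mulVec, add_sub_cancel_right]
    rw [← hBe', mulVec_mulVec, nonsing_inv_mul _ hBdet, one_mulVec]
  have he : e = X⁻¹ *ᵥ w := by rw [mulVec_mulVec, nonsing_inv_mul _ hXdet, one_mulVec]
  have hXB : X ≤ B := le_add_of_nonneg_right (posSemidef_conjTranspose_mul_self C).nonneg
  calc star e' ⬝ᵥ B *ᵥ e' = star w ⬝ᵥ B⁻¹ *ᵥ w := by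
        rw [he', hB.isHermitian.star_dotProduct_mulVec_inv_mulVec hBdet]
    _ ≤ star w ⬝ᵥ X⁻¹ *ᵥ w := star_dotProduct_mulVec_le_of_le (hX.inv_le_inv hXB) w
    _ = star e ⬝ᵥ X *ᵥ e := by
        rw [he, hX.isHermitian.star_dotProduct_mulVec_inv_mulVec hXdet]

end Matrix

theorem rls_lyapunov_decrease_general {m n : ℕ} (x : Fin m → ℂ)
    (A : ℕ → Matrix (Fin n) (Fin m) ℂ)
    (Z : ℕ → Matrix (Fin m) (Fin m) ℂ)
    (xhat : ℕ → (Fin m → ℂ))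
    (l : ℝ) (hl0 : 0 < l)
    (hZ0 : (Z 0).PosDef)
    (hZ : ∀ t : ℕ, Z (t + 1) = ((l : ℂ) • (Z t)⁻¹ + (A (t + 1))ᴴ * A (t + 1))⁻¹)
    (hx : ∀ t : ℕ, xhat (t + 1) = xhat t +
      (Z (t + 1) * (A (t + 1))ᴴ).mulVec ((A (t + 1)).mulVec x - (A (t + 1)).mulVec (xhat t)))
    (W : ℕ → ℝ)
    (hW : ∀ t : ℕ, W t = (star (xhat t - x) ⬝ᵥ (Z t)⁻¹.mulVec (xhat t - x)).re) :
    (∀ t : ℕ, W (t + 1) ≤ l * W t) ∧ (∀ t : ℕ, W t ≤ l ^ t * W 0) := by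
  have hl : (0 : ℂ) < l := Complex.zero_lt_real.mpr hl0
  have hZpd : ∀ t, (Z t).PosDef := by
    intro t
    induction t with
    | zero => exact hZ0
    | succ t ih => rw [hZ t]; exact ((ih.inv.smul hl).add_conjTranspose_mul_self _).inv
  have hstep : ∀ t, W (t + 1) ≤ l * W t := by
    intro t
    set C := A (t + 1)
    set e := xhat t - x
    have hB := ((hZpd t).inv.smul hl).add_conjTranspose_mul_self C
    have hinfo : (Z (t + 1))⁻¹ = (l : ℂ) • (Z t)⁻¹ + Cᴴ * C := by
      rw [hZ t, nonsing_inv_nonsing_inv _ (hB.isUnit.map detMonoidHom)]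
    have herr : xhat (t + 1) - x = e - (Z (t + 1) * Cᴴ) *ᵥ (C *ᵥ e) := by
      simp only [hx t, e, C, mulVec_sub]
      abel
    have key := ((hZpd t).inv.smul hl).star_dotProduct_mulVec_rls_update_le C e
    rw [← hZ t, ← hinfo, ← herr, smul_mulVec, dotProduct_smul, smul_eq_mul] at key
    rw [hW, hW, ← Complex.re_ofReal_mul]
    exact (Complex.le_def.mp key).1
  exact ⟨hstep, fun t => le_geom hl0.le t fun k _ => hstep k⟩

/-- Lyapunov decrease for noise-free RLS: `W_t ≤ λ W_{t−1}` and hence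
`W_t ≤ λᵗ W₀` for all `t`, where `W_t = x̃_tᴴ Z_t⁻¹ x̃_t` (a real quantity). -/
theorem rls_lyapunov_decrease {m n : ℕ} (x : Fin m → ℂ)
    (A : ℕ → Matrix (Fin n) (Fin m) ℂ)
    (Z : ℕ → Matrix (Fin m) (Fin m) ℂ)
    (xhat : ℕ → (Fin m → ℂ))
    (l : ℝ) (hl0 : 0 < l) (hl1 : l ≤ 1)
    (hZ0 : (Z 0).PosDef)
    (hZ : ∀ t : ℕ, Z (t + 1) = ((l : ℂ) • (Z t)⁻¹ + (A (t + 1))ᴴ * A (t + 1))⁻¹)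
    (hx : ∀ t : ℕ, xhat (t + 1) = xhat t +
      (Z (t + 1) * (A (t + 1))ᴴ).mulVec ((A (t + 1)).mulVec x - (A (t + 1)).mulVec (xhat t)))
    (W : ℕ → ℝ)
    (hW : ∀ t : ℕ, W t = (star (xhat t - x) ⬝ᵥ (Z t)⁻¹.mulVec (xhat t - x)).re) :
    (∀ t : ℕ, W (t + 1) ≤ l * W t) ∧ (∀ t : ℕ, W t ≤ l ^ t * W 0) :=
  rls_lyapunov_decrease_general x A Z xhat l hl0 hZ0 hZ hx W hW
end

section
/- Boundedness of RLS error: under the noise-free RLS recursion with λ ∈ (0,1] and Z₀ = Z₀ᴴ ≻ 0, the error satisfies x̃_tᴴ (Z₀⁻¹ + ∑_{i=1}^{t} A_iᴴ A_i) x̃_t ≤ W₀ for all t, where W₀ = x̃₀ᴴ Z₀⁻¹ x̃₀. In particular, μ·‖x̃_t‖² ≤ W₀ where μ > 0 is the smallest eigenvalue of Z₀⁻¹, so ‖x̃_t‖ is bounded uniformly in t. -/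
/-!
Write `P t = (Z t)⁻¹` and `e t = xhat t - x`. The gain recursion says `P (t + 1) = l • P t + Aᴴ A`,
and substituting it into the update gives `e (t + 1) = l • Z (t + 1) P t e t`. Since
`l • P t ≤ P (t + 1)` in the Loewner order and inversion is antitone, the Lyapunov function
`W t = e tᴴ P t e t` satisfies `W (t + 1) ≤ l W t`, so `W t ≤ lᵗ W 0`. Unrolling the recursion with
`lᵗ ≤ 1` gives `lᵗ (P 0 + ∑ Aᵢᴴ Aᵢ) ≤ P t`; dividing by `lᵗ` yields the first bound, and the
second follows from `P 0 ≥ μ • 1`.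
-/

open Matrix Finset
open scoped ComplexOrder MatrixOrder Matrix.Norms.L2Operator

lemma pow_smul_add_sum_le {M : Type*} [AddCommGroup M] [PartialOrder M] [IsOrderedAddMonoid M]
    [Module ℝ M] [PosSMulMono ℝ M] {P B : ℕ → M} {c : ℝ} (hc0 : 0 ≤ c) (hc1 : c ≤ 1)
    (hB : ∀ t, 0 ≤ B t) (hP : ∀ t, P (t + 1) = c • P t + B t) (t : ℕ) :
    c ^ t • (P 0 + ∑ i ∈ range t, B i) ≤ P t := by
  induction t with
  | zero => simp
  | succ t ih =>
    calc c ^ (t + 1) • (P 0 + ∑ i ∈ range (t + 1), B i)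
        = c • c ^ t • (P 0 + ∑ i ∈ range t, B i) + c ^ (t + 1) • B t := by
          rw [sum_range_succ, ← add_assoc, smul_add, pow_succ', mul_smul]
      _ ≤ c • P t + B t :=
          add_le_add (smul_le_smul_of_nonneg_left ih hc0)
            (smul_le_of_le_one_left (hB t) (pow_le_one₀ hc0 hc1))
      _ = P (t + 1) := (hP t).symm

namespace Matrix

section RCLike

variable {𝕜 n : Type*} [RCLike 𝕜] [Fintype n]

lemma re_dotProduct_mulVec_le_of_le {M N : Matrix n n 𝕜} (h : M ≤ N) (v : n → 𝕜) :
    RCLike.re (star v ⬝ᵥ M *ᵥ v) ≤ RCLike.re (star v ⬝ᵥ N *ᵥ v) := by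
  have := (le_iff.mp h).re_dotProduct_nonneg v
  rwa [sub_mulVec, dotProduct_sub, map_sub, sub_nonneg] at this

lemma re_dotProduct_smul_mulVec (c : ℝ) (M : Matrix n n 𝕜) (v : n → 𝕜) :
    RCLike.re (star v ⬝ᵥ (c • M) *ᵥ v) = c * RCLike.re (star v ⬝ᵥ M *ᵥ v) := by
  rw [smul_mulVec, dotProduct_smul, RCLike.smul_re]

lemma star_mulVec_dotProduct_mulVec_mulVec (B M : Matrix n n 𝕜) (v : n → 𝕜) :
    star (B *ᵥ v) ⬝ᵥ M *ᵥ (B *ᵥ v) = star v ⬝ᵥ (Bᴴ * M * B) *ᵥ v := by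
  simp only [star_mulVec, ← dotProduct_mulVec, mulVec_mulVec, Matrix.mul_assoc]

lemma re_star_dotProduct_self (v : n → 𝕜) : RCLike.re (star v ⬝ᵥ v) = ∑ i, ‖v i‖ ^ 2 := by
  simp only [dotProduct, Pi.star_apply, RCLike.star_def, RCLike.conj_mul, map_sum]
  norm_cast

variable [DecidableEq n]

lemma IsHermitian.iInf_eigenvalues_smul_one_le {M : Matrix n n 𝕜} (hM : M.IsHermitian) :
    (⨅ i, hM.eigenvalues i) • (1 : Matrix n n 𝕜) ≤ M := by
  rw [← Algebra.algebraMap_eq_smul_one, algebraMap_le_iff_le_spectrum hM.isSelfAdjoint,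
    hM.spectrum_real_eq_range_eigenvalues]
  rintro _ ⟨i, rfl⟩
  exact ciInf_le (Set.finite_range _).bddBelow i

lemma IsHermitian.iInf_eigenvalues_mul_sum_norm_sq_le {M : Matrix n n 𝕜} (hM : M.IsHermitian)
    (v : n → 𝕜) : (⨅ i, hM.eigenvalues i) * ∑ i, ‖v i‖ ^ 2 ≤ RCLike.re (star v ⬝ᵥ M *ᵥ v) := by
  simpa [re_dotProduct_smul_mulVec, re_star_dotProduct_self] using
    re_dotProduct_mulVec_le_of_le hM.iInf_eigenvalues_smul_one_le v

end RCLike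

variable {m n : Type*} [Fintype m] [Fintype n]

lemma PosDef.smul_add_conjTranspose_mul_self {P : Matrix m m ℂ} (hP : P.PosDef) {c : ℝ}
    (hc : 0 < c) (B : Matrix n m ℂ) : (c • P + Bᴴ * B).PosDef :=
  (hP.smul hc).add_posSemidef (posSemidef_conjTranspose_mul_self B)

variable [DecidableEq m]

lemma PosDef.isUnit_det {M : Matrix m m ℂ} (hM : M.PosDef) : IsUnit M.det :=
  (isUnit_iff_isUnit_det M).mp hM.isUnit

lemma PosDef.inv_le_inv_of_le {P Q : Matrix m m ℂ} (hP : P.PosDef) (h : P ≤ Q) : Q⁻¹ ≤ P⁻¹ := by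
  have hQ : Q.PosDef := by simpa using hP.add_posSemidef (le_iff.mp h)
  have := CStarAlgebra.inv_le_inv (a := hP.isUnit.unit) (b := hQ.isUnit.unit)
    hP.posSemidef.nonneg h
  rwa [coe_units_inv, coe_units_inv, IsUnit.unit_spec, IsUnit.unit_spec] at this

lemma PosDef.conjTranspose_smul_mul_mul_inv_mul_le {P Z : Matrix m m ℂ} (hP : P.PosDef)
    (hZ : Z.PosDef) {c : ℝ} (hc : 0 < c) (h : c • P ≤ Z⁻¹) :
    (c • (Z * P))ᴴ * Z⁻¹ * (c • (Z * P)) ≤ c • P := by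
  have hcP : (c • P).PosDef := hP.smul hc
  have hZc : Z ≤ (c • P)⁻¹ := by
    simpa only [nonsing_inv_nonsing_inv _ hZ.isUnit_det] using hcP.inv_le_inv_of_le h
  have hconj := star_left_conjugate_le_conjugate hZc P
  rw [star_eq_conjTranspose, hP.isHermitian.eq] at hconj
  have hcancel : c • P * (c • P)⁻¹ = 1 := mul_nonsing_inv _ hcP.isUnit_det
  calc (c • (Z * P))ᴴ * Z⁻¹ * (c • (Z * P)) = c • (c • (P * Z * P)) := by
        simp only [conjTranspose_smul, conjTranspose_mul, hP.isHermitian.eq, hZ.isHermitian.eq,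
          star_trivial, smul_mul_assoc, mul_smul_comm, Matrix.mul_assoc,
          mul_nonsing_inv_cancel_left _ _ hZ.isUnit_det]
    _ ≤ c • (c • (P * (c • P)⁻¹ * P)) :=
        smul_le_smul_of_nonneg_left (smul_le_smul_of_nonneg_left hconj hc.le) hc.le
    _ = c • P := by
        congr 1
        rw [← smul_mul_assoc, ← smul_mul_assoc, hcancel, one_mul]

end Matrix

section RLS

variable {m n : Type*} [Fintype m] [DecidableEq m] [Fintype n]

lemma rls_gain_posDef {A : ℕ → Matrix n m ℂ} {Z : ℕ → Matrix m m ℂ} {l : ℝ} (hl : 0 < l)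
    (hZ0 : (Z 0).PosDef) (hZ : ∀ t, Z (t + 1) = (l • (Z t)⁻¹ + (A (t + 1))ᴴ * A (t + 1))⁻¹) :
    ∀ t, (Z t).PosDef
  | 0 => hZ0
  | t + 1 => hZ t ▸ ((rls_gain_posDef hl hZ0 hZ t).inv.smul_add_conjTranspose_mul_self hl _).inv

lemma rls_error_step {l : ℝ} {P Z : Matrix m m ℂ} {B : Matrix n m ℂ} (hZ : IsUnit Z.det)
    (hZinv : Z⁻¹ = l • P + Bᴴ * B) (x xh : m → ℂ) :
    xh + (Z * Bᴴ) *ᵥ (B *ᵥ x - B *ᵥ xh) - x = (l • (Z * P)) *ᵥ (xh - x) := by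
  have hgain : Z * Bᴴ * B = 1 - l • (Z * P) := by
    rw [Matrix.mul_assoc, eq_sub_of_add_eq' hZinv.symm, mul_sub, mul_nonsing_inv _ hZ,
      mul_smul_comm]
  rw [← mulVec_sub, mulVec_mulVec, ← neg_sub xh x, mulVec_neg, hgain, sub_mulVec, one_mulVec]
  abel

lemma rls_lyapunov_step {l : ℝ} (hl : 0 < l) {P Z : Matrix m m ℂ} {B : Matrix n m ℂ}
    (hP : P.PosDef) (hZ : Z.PosDef) (hZinv : Z⁻¹ = l • P + Bᴴ * B) (e : m → ℂ) :
    (star ((l • (Z * P)) *ᵥ e) ⬝ᵥ Z⁻¹ *ᵥ ((l • (Z * P)) *ᵥ e)).re ≤ l * (star e ⬝ᵥ P *ᵥ e).re := by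
  have hle : l • P ≤ Z⁻¹ :=
    hZinv ▸ le_add_of_nonneg_right (posSemidef_conjTranspose_mul_self B).nonneg
  rw [star_mulVec_dotProduct_mulVec_mulVec, ← RCLike.re_to_complex, ← RCLike.re_to_complex,
    ← re_dotProduct_smul_mulVec]
  exact re_dotProduct_mulVec_le_of_le (hP.conjTranspose_smul_mul_mul_inv_mul_le hZ hl hle) e

end RLS

/-- Boundedness of the noise-free RLS error: for all `t`,
`x̃_tᴴ (Z₀⁻¹ + ∑_{i=1}^{t} A_iᴴ A_i) x̃_t ≤ W₀`, and `μ ‖x̃_t‖² ≤ W₀`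
where `μ` is the smallest eigenvalue of `Z₀⁻¹`; hence `‖x̃_t‖` is bounded. -/
theorem rls_error_bounded {m n : ℕ} (x : Fin m → ℂ)
    (A : ℕ → Matrix (Fin n) (Fin m) ℂ)
    (Z : ℕ → Matrix (Fin m) (Fin m) ℂ)
    (xhat : ℕ → (Fin m → ℂ))
    (l : ℝ) (hl0 : 0 < l) (hl1 : l ≤ 1)
    (hZ0 : (Z 0).PosDef)
    (hH : ((Z 0)⁻¹).IsHermitian)
    (hZ : ∀ t : ℕ, Z (t + 1) = ((l : ℂ) • (Z t)⁻¹ + (A (t + 1))ᴴ * A (t + 1))⁻¹)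
    (hx : ∀ t : ℕ, xhat (t + 1) = xhat t +
      (Z (t + 1) * (A (t + 1))ᴴ).mulVec ((A (t + 1)).mulVec x - (A (t + 1)).mulVec (xhat t))) :
    ∀ t : ℕ,
      (star (xhat t - x) ⬝ᵥ
          ((Z 0)⁻¹ + ∑ i ∈ Finset.range t, (A (i + 1))ᴴ * A (i + 1)).mulVec
            (xhat t - x)).re ≤
        (star (xhat 0 - x) ⬝ᵥ (Z 0)⁻¹.mulVec (xhat 0 - x)).re ∧
      (⨅ i : Fin m, hH.eigenvalues i) * (∑ i : Fin m, ‖(xhat t - x) i‖ ^ 2) ≤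
        (star (xhat 0 - x) ⬝ᵥ (Z 0)⁻¹.mulVec (xhat 0 - x)).re := by
  have hZ' : ∀ t, Z (t + 1) = (l • (Z t)⁻¹ + (A (t + 1))ᴴ * A (t + 1))⁻¹ := by
    simpa only [Complex.coe_smul] using hZ
  have hpd := rls_gain_posDef hl0 hZ0 hZ'
  have hinfo : ∀ t, (Z (t + 1))⁻¹ = l • (Z t)⁻¹ + (A (t + 1))ᴴ * A (t + 1) := fun t => by
    rw [hZ' t, nonsing_inv_nonsing_inv _
      ((hpd t).inv.smul_add_conjTranspose_mul_self hl0 _).isUnit_det]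
  have hW := fun t =>
    le_geom (u := fun s => (star (xhat s - x) ⬝ᵥ (Z s)⁻¹ *ᵥ (xhat s - x)).re) hl0.le t fun k _ => by
      rw [hx k, rls_error_step (hpd (k + 1)).isUnit_det (hinfo k)]
      exact rls_lyapunov_step hl0 (hpd k).inv (hpd (k + 1)) (hinfo k) _
  intro t
  have hS := re_dotProduct_mulVec_le_of_le (pow_smul_add_sum_le (P := fun s => (Z s)⁻¹) hl0.le hl1
    (fun i => (posSemidef_conjTranspose_mul_self (A (i + 1))).nonneg) hinfo t) (xhat t - x)
  rw [re_dotProduct_smul_mulVec] at hS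
  have hbound := le_of_mul_le_mul_left (hS.trans (hW t)) (pow_pos hl0 t)
  refine ⟨hbound, le_trans ?_ hbound⟩
  calc (⨅ i, hH.eigenvalues i) * ∑ i, ‖(xhat t - x) i‖ ^ 2
      ≤ (star (xhat t - x) ⬝ᵥ (Z 0)⁻¹ *ᵥ (xhat t - x)).re :=
        hH.iInf_eigenvalues_mul_sum_norm_sq_le _
    _ ≤ _ := re_dotProduct_mulVec_le_of_le (le_add_of_nonneg_right
        (Finset.sum_nonneg fun i _ => (posSemidef_conjTranspose_mul_self (A (i + 1))).nonneg)) _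
end
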